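/- Suppose Hypothesis (H) holds and there exists x₀ ∈ M∖Z with P(x₀,M) < 1. Then there exist n₀ ∈ ℕ and α ∈ (0,1) such that P^n(x,M) ≤ α^{⌊n/n₀⌋} for all x ∈ M and all n ∈ ℕ. In particular lim_{n→∞} P^n(x,M) = 0 for every x ∈ M, and the spectral radius of the Koopman operator 𝒫 on (C(M),‖·‖_∞) is strictly less than 1. -/

import Mathlib

/-
Continuity of `x ↦ dP(x,·)/dρ` in `L¹(ρ)` makes every survival probability `x ↦ Pⁿ(x,M)`
continuous, and these decrease in `n`. Irreducibility sends every point not killed at once,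
with positive probability, into the open neighbourhood of `x₀` on which one more step loses
mass, so each `x` has some `Pⁿ(x,M) < 1`; by compactness one `n₀` and one `θ < 1` serve all
`x`, and the Markov property iterates this to `θ^⌊n/n₀⌋`. The same estimate gives
`‖𝒫^{n₀}‖ ≤ θ`, hence a spectral radius at most `θ^{1/n₀} < 1`.
-/

open MeasureTheory Filter Topology

noncomputable section

variable {M : Type*}

/-- The iterated transition kernel: `iterP P 0 x = δ_x` (identity kernel), so that
`iterP P 1 = P` and `iterP P (n+1) x A = ∫ iterP P n y A ∂(P x)`. -/
def iterP [MeasurableSpace M] (P : M → Measure M) : ℕ → M → Measure M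
  | 0 => fun x => Measure.dirac x
  | n + 1 => fun x => (P x).bind (iterP P n)

/-- Hypothesis (H) of the paper: `P` is a measurable sub-Markovian kernel; (H1) each
`P x` is absolutely continuous w.r.t. `ρ` and `x ↦ dP(x,·)/dρ` is continuous into `L¹(ρ)`;
(H2) `ρ(M∖Z) > 0` where `Z = {x | P(x,M) = 0}`, and from every non-escaping point every
nonempty open set is reached with positive probability in some positive time. -/
structure HypH [MetricSpace M] [MeasurableSpace M] (P : M → Measure M) (ρ : Measure M) : Prop where
  meas : Measurable P
  subMarkov : ∀ x, P x Set.univ ≤ 1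
  absCont : ∀ x, P x ≪ ρ
  densityCont : ∀ ε : ℝ, 0 < ε → ∃ δ : ℝ, 0 < δ ∧ ∀ x z : M, dist x z < δ →
      (∫⁻ y, ((P x).rnDeriv ρ y - (P z).rnDeriv ρ y)
        + ((P z).rnDeriv ρ y - (P x).rnDeriv ρ y) ∂ρ) < ENNReal.ofReal ε
  rhoPos : 0 < ρ {x | P x Set.univ ≠ 0}
  irred : ∀ x, P x Set.univ ≠ 0 → ∀ A : Set M, IsOpen A → A.Nonempty →
      ∃ n : ℕ, 0 < n ∧ 0 < iterP P n x A

open Set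
open scoped ENNReal

section IterP

variable [MeasurableSpace M] {P : M → Measure M}

lemma measurable_iterP (hP : Measurable P) (n : ℕ) : Measurable (iterP P n) := by
  induction n with
  | zero => exact Measure.measurable_dirac
  | succ n ih => exact (Measure.measurable_bind' ih).comp hP

lemma measurable_iterP_univ (hP : Measurable P) (n : ℕ) :
    Measurable fun x => iterP P n x univ :=
  (Measure.measurable_coe MeasurableSet.univ).comp (measurable_iterP hP n)

lemma iterP_zero_univ (x : M) : iterP P 0 x univ = 1 := by
  simp [iterP]

lemma iterP_one (x : M) : iterP P 1 x = P x :=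
  Measure.bind_dirac

lemma iterP_add (hP : Measurable P) (m n : ℕ) (x : M) :
    iterP P (m + n) x = (iterP P m x).bind (iterP P n) := by
  induction m generalizing x with
  | zero => rw [Nat.zero_add, iterP, Measure.dirac_bind (measurable_iterP hP n)]
  | succ m ih =>
    rw [Nat.succ_add, iterP, iterP, funext ih,
      Measure.bind_bind (measurable_iterP hP m).aemeasurable (measurable_iterP hP n).aemeasurable]

lemma iterP_add_univ (hP : Measurable P) (m n : ℕ) (x : M) :
    iterP P (m + n) x univ = ∫⁻ y, iterP P n y univ ∂iterP P m x := by
  rw [iterP_add hP, Measure.bind_apply MeasurableSet.univ (measurable_iterP hP n).aemeasurable]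

lemma iterP_succ_univ (hP : Measurable P) (n : ℕ) (x : M) :
    iterP P (n + 1) x univ = ∫⁻ y, P y univ ∂iterP P n x := by
  simp only [iterP_add_univ hP n 1, iterP_one]

lemma iterP_succ_univ' (hP : Measurable P) (n : ℕ) (x : M) :
    iterP P (n + 1) x univ = ∫⁻ y, iterP P n y univ ∂P x := by
  rw [Nat.add_comm, iterP_add_univ hP, iterP_one]

variable (hP : Measurable P) (hsub : ∀ x, P x univ ≤ 1)
include hP hsub

lemma iterP_univ_le_one (n : ℕ) (x : M) : iterP P n x univ ≤ 1 := by
  induction n generalizing x with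
  | zero => rw [iterP_zero_univ]
  | succ n ih =>
    rw [iterP_succ_univ' hP]
    exact (lintegral_mono fun y => ih y).trans (lintegral_one.trans_le (hsub x))

lemma antitone_iterP_univ (x : M) : Antitone fun n => iterP P n x univ :=
  antitone_nat_of_succ_le fun n => by
    rw [iterP_succ_univ hP]
    exact (lintegral_mono fun y => hsub y).trans_eq lintegral_one

lemma iterP_univ_le_pow_div {n₀ : ℕ} (hn₀ : 0 < n₀) {c : ℝ≥0∞}
    (hc : ∀ x, iterP P n₀ x univ ≤ c) (n : ℕ) (x : M) :
    iterP P n x univ ≤ c ^ (n / n₀) := by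
  induction n using Nat.strong_induction_on generalizing x with
  | _ n ih =>
    rcases lt_or_ge n n₀ with hn | hn
    · rw [Nat.div_eq_of_lt hn, pow_zero]
      exact iterP_univ_le_one hP hsub n x
    obtain ⟨m, rfl⟩ := Nat.exists_eq_add_of_le hn
    calc iterP P (n₀ + m) x univ = ∫⁻ y, iterP P m y univ ∂iterP P n₀ x :=
          iterP_add_univ hP n₀ m x
      _ ≤ ∫⁻ _, c ^ (m / n₀) ∂iterP P n₀ x := lintegral_mono fun y => ih m (by omega) y
      _ = c ^ (m / n₀) * iterP P n₀ x univ := lintegral_const _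
      _ ≤ c ^ (m / n₀) * c := by gcongr; exact hc x
      _ = c ^ ((n₀ + m) / n₀) := by rw [← pow_succ, Nat.add_comm n₀ m, Nat.add_div_right _ hn₀]

end IterP

lemma lintegral_le_lintegral_add_lintegral_rnDeriv_tsub {X : Type*} [MeasurableSpace X]
    {μ ν ρ : Measure X} [μ.HaveLebesgueDecomposition ρ] [ν.HaveLebesgueDecomposition ρ]
    (hμ : μ ≪ ρ) (hν : ν ≪ ρ) {h : X → ℝ≥0∞} (hh : Measurable h) (hle : ∀ y, h y ≤ 1) :
    ∫⁻ y, h y ∂μ ≤ ∫⁻ y, h y ∂ν + ∫⁻ y, μ.rnDeriv ρ y - ν.rnDeriv ρ y ∂ρ := by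
  have hνh : Measurable fun y => ν.rnDeriv ρ y * h y := by fun_prop
  rw [← lintegral_rnDeriv_mul hμ hh.aemeasurable, ← lintegral_rnDeriv_mul hν hh.aemeasurable,
    ← lintegral_add_left hνh]
  refine lintegral_mono fun y => ?_
  calc μ.rnDeriv ρ y * h y ≤ (ν.rnDeriv ρ y + (μ.rnDeriv ρ y - ν.rnDeriv ρ y)) * h y := by
        gcongr; exact le_add_tsub
    _ = ν.rnDeriv ρ y * h y + (μ.rnDeriv ρ y - ν.rnDeriv ρ y) * h y := add_mul _ _ _
    _ ≤ ν.rnDeriv ρ y * h y + (μ.rnDeriv ρ y - ν.rnDeriv ρ y) := by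
        gcongr; exact mul_le_of_le_one_right' (hle y)

lemma lintegral_lt_one_of_le_on {X : Type*} [MeasurableSpace X] {μ : Measure X}
    {f : X → ℝ≥0∞} {B : Set X} {β : ℝ≥0∞} (hμ : μ univ ≤ 1) (hf : ∀ y, f y ≤ 1)
    (hB : MeasurableSet B) (hfB : ∀ y ∈ B, f y ≤ β) (hβ : β < 1) (hμB : μ B ≠ 0) :
    ∫⁻ y, f y ∂μ < 1 := by
  have hfin : ∀ s, μ s ≠ ∞ := fun s => ne_top_of_le_ne_top ENNReal.one_ne_top ((measure_mono
    (subset_univ s)).trans hμ)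
  calc ∫⁻ y, f y ∂μ ≤ ∫⁻ y, B.indicator (fun _ => β) y + Bᶜ.indicator 1 y ∂μ := by
        refine lintegral_mono fun y => ?_
        by_cases hy : y ∈ B
        · simpa [hy] using hfB y hy
        · simpa [hy] using hf y
    _ = β * μ B + μ Bᶜ := by
        rw [lintegral_add_left (measurable_const.indicator hB), lintegral_indicator_const hB,
          lintegral_indicator_one hB.compl]
    _ < μ B + μ Bᶜ := by
        gcongr
        · exact hfin _
        · exact (ENNReal.mul_lt_mul_left hμB (hfin B) hβ).trans_eq (one_mul _)
    _ = μ univ := measure_add_measure_compl hB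
    _ ≤ 1 := hμ

theorem exists_uniform_bound_lt_of_antitone {X α : Type*} [TopologicalSpace X]
    [CompactSpace X] [Nonempty X] [LinearOrder α] [TopologicalSpace α] [OrderClosedTopology α]
    {F : ℕ → X → α} {c : α} (hF : ∀ n, Continuous (F n)) (hanti : ∀ x, Antitone fun n => F n x)
    (h : ∀ x, ∃ n, F n x < c) : ∃ n₀, ∃ θ < c, ∀ n ≥ n₀, ∀ x, F n x ≤ θ := by
  obtain ⟨n₀, hcover⟩ := isCompact_univ.elim_directed_cover (fun n => {x | F n x < c})
    (fun n => isOpen_lt (hF n) continuous_const) (fun x _ => mem_iUnion.2 (h x))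
    (Monotone.directed_le fun m n hmn x hx => (hanti x hmn).trans_lt hx)
  obtain ⟨xmax, -, hmax⟩ := isCompact_univ.exists_isMaxOn univ_nonempty (hF n₀).continuousOn
  exact ⟨n₀, F n₀ xmax, hcover (mem_univ xmax),
    fun n hn x => (hanti x hn).trans (hmax (mem_univ x))⟩

namespace HypH

variable [MetricSpace M] [MeasurableSpace M] {P : M → Measure M} {ρ : Measure M}

lemma isFiniteMeasure (hH : HypH P ρ) (x : M) : IsFiniteMeasure (P x) :=
  ⟨(hH.subMarkov x).trans_lt ENNReal.one_lt_top⟩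

lemma continuous_lintegral [IsFiniteMeasure ρ] (hH : HypH P ρ) {h : M → ℝ≥0∞}
    (hh : Measurable h) (hle : ∀ y, h y ≤ 1) : Continuous fun x => ∫⁻ y, h y ∂P x := by
  have hfin (x : M) : ∫⁻ y, h y ∂P x ≠ ∞ := ne_top_of_le_ne_top ENNReal.one_ne_top
    ((lintegral_mono hle).trans (lintegral_one.trans_le (hH.subMarkov x)))
  suffices Continuous fun x => (∫⁻ y, h y ∂P x).toReal by
    exact (ENNReal.continuous_ofReal.comp this).congr fun x => ENNReal.ofReal_toReal (hfin x)
  rw [Metric.continuous_iff]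
  intro x ε hε
  obtain ⟨δ, hδ, hclose⟩ := hH.densityCont ε hε
  have hlt (a b : M) (hab : dist a b < δ) :
      (∫⁻ y, h y ∂P a).toReal < (∫⁻ y, h y ∂P b).toReal + ε := by
    have := hH.isFiniteMeasure a
    have := hH.isFiniteMeasure b
    have hI : ∫⁻ y, h y ∂P a < ∫⁻ y, h y ∂P b + ENNReal.ofReal ε :=
      (lintegral_le_lintegral_add_lintegral_rnDeriv_tsub (hH.absCont a) (hH.absCont b) hh
        hle).trans_lt (ENNReal.add_lt_add_left (hfin b)
          ((lintegral_mono fun y => le_self_add).trans_lt (hclose a b hab)))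
    have := ENNReal.toReal_strict_mono (ENNReal.add_ne_top.2 ⟨hfin b, ENNReal.ofReal_ne_top⟩) hI
    rwa [ENNReal.toReal_add (hfin b) ENNReal.ofReal_ne_top, ENNReal.toReal_ofReal hε.le] at this
  refine ⟨δ, hδ, fun z hz => ?_⟩
  rw [Real.dist_eq, abs_sub_lt_iff]
  constructor
  · linarith [hlt z x hz]
  · linarith [hlt x z (by rwa [dist_comm])]

lemma continuous_measure_univ [IsFiniteMeasure ρ] (hH : HypH P ρ) :
    Continuous fun x => P x univ := by
  simpa only [lintegral_const, one_mul] using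
    hH.continuous_lintegral (h := fun _ => 1) measurable_const fun _ => le_rfl

lemma continuous_iterP_univ [IsFiniteMeasure ρ] (hH : HypH P ρ) (n : ℕ) :
    Continuous fun x => iterP P n x univ := by
  cases n with
  | zero => simpa only [iterP_zero_univ] using continuous_const
  | succ n =>
    simpa only [iterP_succ_univ' hH.meas] using hH.continuous_lintegral
      (measurable_iterP_univ hH.meas n) (iterP_univ_le_one hH.meas hH.subMarkov n)

lemma exists_iterP_univ_lt_one [IsFiniteMeasure ρ] [BorelSpace M] (hH : HypH P ρ) {x₀ : M}
    (hx₀ : P x₀ univ < 1) (x : M) : ∃ n, iterP P n x univ < 1 := by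
  by_cases hx : P x univ = 0
  · exact ⟨1, by rw [iterP_one, hx]; exact zero_lt_one⟩
  obtain ⟨β, hx₀β, hβ⟩ := exists_between hx₀
  have hB : IsOpen {z | P z univ < β} := isOpen_lt hH.continuous_measure_univ continuous_const
  obtain ⟨n, -, hn⟩ := hH.irred x hx _ hB ⟨x₀, hx₀β⟩
  refine ⟨n + 1, ?_⟩
  rw [iterP_succ_univ hH.meas]
  exact lintegral_lt_one_of_le_on (iterP_univ_le_one hH.meas hH.subMarkov n x) hH.subMarkov
    hB.measurableSet (fun y hy => le_of_lt hy) hβ hn.ne'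

end HypH

section Koopman

variable [TopologicalSpace M] [CompactSpace M] [MeasurableSpace M] {P : M → Measure M}
  {T : C(M, ℝ) →L[ℝ] C(M, ℝ)}

lemma enorm_pow_apply_le (hP : Measurable P) (hT : ∀ f x, T f x = ∫ y, f y ∂P x) (n : ℕ)
    (f : C(M, ℝ)) (x : M) : ‖(T ^ n) f x‖ₑ ≤ ‖f‖ₑ * iterP P n x univ := by
  induction n generalizing x with
  | zero =>
    rw [pow_zero, iterP_zero_univ, mul_one, ← ofReal_norm, ← ofReal_norm]
    exact ENNReal.ofReal_le_ofReal (f.norm_coe_le_norm x)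
  | succ n ih =>
    calc ‖(T ^ (n + 1)) f x‖ₑ = ‖∫ y, (T ^ n) f y ∂P x‖ₑ := by
          rw [pow_succ']; exact congrArg (‖·‖ₑ) (hT _ x)
      _ ≤ ∫⁻ y, ‖(T ^ n) f y‖ₑ ∂P x := enorm_integral_le_lintegral_enorm _
      _ ≤ ∫⁻ y, ‖f‖ₑ * iterP P n y univ ∂P x := lintegral_mono fun y => ih y
      _ = ‖f‖ₑ * iterP P (n + 1) x univ := by
          rw [lintegral_const_mul _ (measurable_iterP_univ hP n), iterP_succ_univ' hP]

lemma norm_pow_le_of_iterP_univ_le (hP : Measurable P)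
    (hT : ∀ f x, T f x = ∫ y, f y ∂P x) {n : ℕ} {α : ℝ} (hα : 0 ≤ α)
    (h : ∀ x, iterP P n x univ ≤ ENNReal.ofReal α) : ‖T ^ n‖ ≤ α := by
  refine ContinuousLinearMap.opNorm_le_bound _ hα fun f => ?_
  refine (ContinuousMap.norm_le _ (by positivity)).2 fun x => ?_
  have := (enorm_pow_apply_le hP hT n f x).trans (mul_le_mul_right (h x) _)
  rwa [← ofReal_norm, ← ofReal_norm, ← ENNReal.ofReal_mul (norm_nonneg _),
    ENNReal.ofReal_le_ofReal_iff (by positivity), mul_comm] at this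

end Koopman

lemma spectralRadius_lt_one_of_norm_pow_lt_one {𝕜 E : Type*} [NontriviallyNormedField 𝕜]
    [NormedAddCommGroup E] [NormedSpace 𝕜 E] [CompleteSpace E] (T : E →L[𝕜] E) {n : ℕ}
    (hn : 0 < n) (h : ‖T ^ n‖ < 1) : spectralRadius 𝕜 T < 1 := by
  obtain ⟨k, rfl⟩ := Nat.exists_eq_add_of_lt hn
  have hexp : (0 : ℝ) < 1 / (k + 1) := by positivity
  have hpow : ‖T ^ (k + 1)‖₊ < 1 := by rw [← NNReal.coe_lt_coe]; simpa using h
  calc spectralRadius 𝕜 T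
      ≤ (‖T ^ (k + 1)‖₊ : ℝ≥0∞) ^ (1 / (k + 1) : ℝ) *
          (‖(1 : E →L[𝕜] E)‖₊ : ℝ≥0∞) ^ (1 / (k + 1) : ℝ) :=
        spectrum.spectralRadius_le_pow_nnnorm_pow_one_div 𝕜 T k
    _ ≤ (‖T ^ (k + 1)‖₊ : ℝ≥0∞) ^ (1 / (k + 1) : ℝ) * 1 := by
        gcongr
        exact ENNReal.rpow_le_one (ENNReal.coe_le_one_iff.2 ContinuousLinearMap.norm_id_le) hexp.le
    _ < 1 := by
        rw [mul_one]
        exact ENNReal.rpow_lt_one (ENNReal.coe_lt_one_iff.2 hpow) hexp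

theorem uniform_escape_of_hypH_general
    [MetricSpace M] [CompactSpace M] [MeasurableSpace M] [BorelSpace M]
    (ρ : Measure M) [IsFiniteMeasure ρ] (P : M → Measure M) (hH : HypH P ρ)
    (x₀ : M) (hx₀lt : P x₀ Set.univ < 1)
    (T : C(M, ℝ) →L[ℝ] C(M, ℝ)) (hT : ∀ (f : C(M, ℝ)) (x : M), T f x = ∫ y, f y ∂(P x)) :
    (∃ n₀ : ℕ, 0 < n₀ ∧ ∃ α : ℝ, 0 < α ∧ α < 1 ∧
      ∀ (x : M) (n : ℕ), iterP P n x Set.univ ≤ ENNReal.ofReal (α ^ (n / n₀))) ∧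
    (∀ x : M, Tendsto (fun n : ℕ => iterP P n x Set.univ) atTop (𝓝 0)) ∧
    spectralRadius ℝ T < 1 := by
  have : Nonempty M := ⟨x₀⟩
  obtain ⟨n₀, θ, hθ1, hθ⟩ := exists_uniform_bound_lt_of_antitone hH.continuous_iterP_univ
    (antitone_iterP_univ hH.meas hH.subMarkov) (hH.exists_iterP_univ_lt_one hx₀lt)
  obtain ⟨α, hα, hθα, hα1⟩ := ENNReal.lt_iff_exists_real_btwn.1 hθ1
  have hαpos : 0 < α := ENNReal.ofReal_pos.1 (hθα.trans_le' bot_le)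
  have hunif (x : M) : iterP P (n₀ + 1) x univ ≤ ENNReal.ofReal α :=
    (hθ _ n₀.le_succ x).trans hθα.le
  have hgeom (x : M) (n : ℕ) : iterP P n x univ ≤ ENNReal.ofReal α ^ (n / (n₀ + 1)) :=
    iterP_univ_le_pow_div hH.meas hH.subMarkov n₀.succ_pos hunif n x
  refine ⟨⟨n₀ + 1, n₀.succ_pos, α, hαpos, ENNReal.ofReal_lt_one.1 hα1, fun x n => ?_⟩,
    fun x => ?_, ?_⟩
  · rw [ENNReal.ofReal_pow hα]
    exact hgeom x n
  · exact tendsto_of_tendsto_of_tendsto_of_le_of_le tendsto_const_nhds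
      ((ENNReal.tendsto_pow_atTop_nhds_zero_of_lt_one hα1).comp
        (Nat.tendsto_div_const_atTop n₀.succ_ne_zero)) (fun _ => bot_le) (hgeom x)
  · exact spectralRadius_lt_one_of_norm_pow_lt_one T n₀.succ_pos
      ((norm_pow_le_of_iterP_univ_le hH.meas hT hα hunif).trans_lt (ENNReal.ofReal_lt_one.1 hα1))

/-- **Proposition (uniform escape).** Under Hypothesis (H), if some non-escaping point
`x₀` has `P(x₀,M) < 1`, then there are `n₀ ∈ ℕ` and `α ∈ (0,1)` with
`Pⁿ(x,M) ≤ α^⌊n/n₀⌋` for all `x` and `n`; in particular `Pⁿ(x,M) → 0` for every `x`, and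
the spectral radius of the Koopman operator is `< 1`. -/
theorem uniform_escape_of_hypH
    [MetricSpace M] [CompactSpace M] [MeasurableSpace M] [BorelSpace M]
    (ρ : Measure M) [IsFiniteMeasure ρ] (P : M → Measure M) (hH : HypH P ρ)
    (x₀ : M) (hx₀ : P x₀ Set.univ ≠ 0) (hx₀lt : P x₀ Set.univ < 1)
    (T : C(M, ℝ) →L[ℝ] C(M, ℝ)) (hT : ∀ (f : C(M, ℝ)) (x : M), T f x = ∫ y, f y ∂(P x)) :
    (∃ n₀ : ℕ, 0 < n₀ ∧ ∃ α : ℝ, 0 < α ∧ α < 1 ∧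
      ∀ (x : M) (n : ℕ), iterP P n x Set.univ ≤ ENNReal.ofReal (α ^ (n / n₀))) ∧
    (∀ x : M, Tendsto (fun n : ℕ => iterP P n x Set.univ) atTop (𝓝 0)) ∧
    spectralRadius ℝ T < 1 :=
  uniform_escape_of_hypH_general ρ P hH x₀ hx₀lt T hT
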